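/- Let X ⊆ ℝ be compact, μ, ν Borel probability measures on X, and U a uniform random variable on [0,1]. Define X₀ := F_μ^{-1}(U) and Y₀ := F_ν^{-1}(U) using the quantile functions of μ and ν. Then the law γ of the pair (X₀, Y₀) is a coupling of μ and ν, and this coupling attains the Wasserstein-1 distance: ∫ |x − y| γ(dx,dy) = W₁(μ, ν). -/

import Mathlib

/-!
For any coupling `γ` of `μ` and `ν`, `|F_μ(x) - F_ν(x)|` is at most the `γ`-mass of the
symmetric difference of `{p.1 ≤ x}` and `{p.2 ≤ x}`, that is of `{min p.1 p.2 ≤ x < max p.1 p.2}`;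
integrating in `x` (Fubini) gives `∫ |F_μ - F_ν| ≤ ∫ |p.1 - p.2| dγ`. For the quantile coupling
this is an equality: the Galois connection `Q(u) ≤ x ↔ u ≤ F(x)` on `(0, 1]` turns
`min Q_μ(u) Q_ν(u) ≤ x < max Q_μ(u) Q_ν(u)` into `u` lying between `F_μ(x)` and `F_ν(x)`, so
Fubini turns `∫₀¹ |Q_μ - Q_ν|` into `∫ |F_μ - F_ν|` as well.
-/

open MeasureTheory Set ProbabilityTheory
open scoped Interval symmDiff

lemma mem_Ico_min_max_iff {α : Type*} [LinearOrder α] {a b t : α} :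
    t ∈ Ico (min a b) (max a b) ↔ ¬(a ≤ t ↔ b ≤ t) := by
  simp only [mem_Ico, min_le_iff, ← not_le, max_le_iff]
  tauto

lemma mem_uIoc_iff {α : Type*} [LinearOrder α] {a b t : α} :
    t ∈ Ι a b ↔ ¬(t ≤ a ↔ t ≤ b) := by
  simp only [uIoc, mem_Ioc, ← not_le, le_min_iff, le_max_iff]
  tauto

lemma volume_Ico_min_max (a b : ℝ) :
    volume (Ico (min a b) (max a b)) = ENNReal.ofReal |a - b| := by
  rw [Real.volume_Ico, max_sub_min_eq_abs']

section Coupling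

variable {μ ν : Measure ℝ} {γ : Measure (ℝ × ℝ)}

lemma ofReal_abs_sub_cdf_le [IsProbabilityMeasure μ] [IsProbabilityMeasure ν] [IsFiniteMeasure γ]
    (h1 : γ.map Prod.fst = μ) (h2 : γ.map Prod.snd = ν) (x : ℝ) :
    ENNReal.ofReal |cdf μ x - cdf ν x| ≤ γ {p | x ∈ Ico (min p.1 p.2) (max p.1 p.2)} := by
  have hfst : MeasurableSet (Prod.fst ⁻¹' Iic x : Set (ℝ × ℝ)) := measurable_fst measurableSet_Iic
  have hsnd : MeasurableSet (Prod.snd ⁻¹' Iic x : Set (ℝ × ℝ)) := measurable_snd measurableSet_Iic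
  have hset : {p : ℝ × ℝ | x ∈ Ico (min p.1 p.2) (max p.1 p.2)}
      = (Prod.fst ⁻¹' Iic x) ∆ (Prod.snd ⁻¹' Iic x) := by
    ext p
    simp only [mem_ofPred_eq, mem_Ico_min_max_iff, mem_symmDiff, mem_preimage, mem_Iic]
    tauto
  rw [cdf_eq_real, cdf_eq_real, ← h1, ← h2, map_measureReal_apply measurable_fst measurableSet_Iic,
    map_measureReal_apply measurable_snd measurableSet_Iic, hset, ← ofReal_measureReal]
  exact ENNReal.ofReal_le_ofReal
    (abs_measureReal_sub_le_measureReal_symmDiff hfst.nullMeasurableSet hsnd.nullMeasurableSet)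

lemma lintegral_abs_sub_cdf_le [IsProbabilityMeasure μ] [IsProbabilityMeasure ν]
    [IsFiniteMeasure γ] (h1 : γ.map Prod.fst = μ) (h2 : γ.map Prod.snd = ν) :
    ∫⁻ x, ENNReal.ofReal |cdf μ x - cdf ν x| ≤ ∫⁻ p, ENNReal.ofReal |p.1 - p.2| ∂γ := by
  set S := {q : ℝ × (ℝ × ℝ) | q.1 ∈ Ico (min q.2.1 q.2.2) (max q.2.1 q.2.2)}
  have hS : MeasurableSet S :=
    (measurableSet_le (measurable_snd.fst.min measurable_snd.snd) measurable_fst).inter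
      (measurableSet_lt measurable_fst (measurable_snd.fst.max measurable_snd.snd))
  calc ∫⁻ x, ENNReal.ofReal |cdf μ x - cdf ν x|
      ≤ ∫⁻ x, γ (Prod.mk x ⁻¹' S) := lintegral_mono (ofReal_abs_sub_cdf_le h1 h2)
    _ = ∫⁻ p, volume (Ico (min p.1 p.2) (max p.1 p.2)) ∂γ := by
        rw [← Measure.prod_apply hS, Measure.prod_apply_symm hS]
        rfl
    _ = ∫⁻ p, ENNReal.ofReal |p.1 - p.2| ∂γ := by simp only [volume_Ico_min_max]

lemma integrable_abs_sub_of_isCompact {X : Set ℝ} (hX : IsCompact X) [IsFiniteMeasure γ]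
    (h1 : γ.map Prod.fst = μ) (h2 : γ.map Prod.snd = ν) (hμ : μ Xᶜ = 0) (hν : ν Xᶜ = 0) :
    Integrable (fun p : ℝ × ℝ => |p.1 - p.2|) γ := by
  have hae : ∀ᵐ p ∂γ, p ∈ X ×ˢ X :=
    (ae_of_ae_map measurable_fst.aemeasurable (h1 ▸ ae_iff.2 hμ)).and
      (ae_of_ae_map measurable_snd.aemeasurable (h2 ▸ ae_iff.2 hν))
  rw [← Measure.restrict_eq_self_of_ae_mem hae]
  exact (continuous_fst.sub continuous_snd).abs.continuousOn.integrableOn_compact (hX.prod hX)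

end Coupling

def IsQuantileFun (μ : Measure ℝ) (Q : ℝ → ℝ) : Prop :=
  ∀ u ∈ Ioc (0 : ℝ) 1, ∀ x, Q u ≤ x ↔ u ≤ cdf μ x

noncomputable def comonotoneCoupling (Q R : ℝ → ℝ) : Measure (ℝ × ℝ) :=
  (volume.restrict (Ioc 0 1)).map fun u => (Q u, R u)

namespace IsQuantileFun

variable {μ ν : Measure ℝ} {Q R : ℝ → ℝ}

lemma monotoneOn (hQ : IsQuantileFun μ Q) : MonotoneOn Q (Ioc 0 1) :=
  fun _ hs _ ht hst => (hQ _ hs _).2 (hst.trans ((hQ _ ht _).1 le_rfl))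

lemma aemeasurable (hQ : IsQuantileFun μ Q) : AEMeasurable Q (volume.restrict (Ioc 0 1)) :=
  aemeasurable_restrict_of_monotoneOn measurableSet_Ioc hQ.monotoneOn

lemma map_volume [IsProbabilityMeasure μ] (hQ : IsQuantileFun μ Q) :
    (volume.restrict (Ioc 0 1)).map Q = μ := by
  refine Measure.ext_of_Iic _ _ fun x => ?_
  have hpre : Q ⁻¹' Iic x ∩ Ioc 0 1 = Ioc 0 (cdf μ x) := by
    ext u
    simp only [mem_inter_iff, mem_preimage, mem_Iic, mem_Ioc]
    constructor
    · rintro ⟨hux, hu⟩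
      exact ⟨hu.1, (hQ u hu x).1 hux⟩
    · rintro ⟨hu0, hux⟩
      have hu : u ∈ Ioc (0 : ℝ) 1 := ⟨hu0, hux.trans (cdf_le_one μ x)⟩
      exact ⟨(hQ u hu x).2 hux, hu⟩
  rw [Measure.map_apply_of_aemeasurable hQ.aemeasurable measurableSet_Iic,
    Measure.restrict_apply' measurableSet_Ioc, hpre, Real.volume_Ioc, sub_zero, ofReal_cdf]

lemma lintegral_abs_sub [IsProbabilityMeasure μ] [IsProbabilityMeasure ν]
    (hQ : IsQuantileFun μ Q) (hR : IsQuantileFun ν R) :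
    ∫⁻ u in Ioc 0 1, ENNReal.ofReal |Q u - R u| = ∫⁻ x, ENNReal.ofReal |cdf μ x - cdf ν x| := by
  set S := {p : ℝ × ℝ | p.1 ∈ Ι (cdf μ p.2) (cdf ν p.2)}
  have hS : MeasurableSet S := by
    have hμ : Measurable fun p : ℝ × ℝ => cdf μ p.2 :=
      (monotone_cdf μ).measurable.comp measurable_snd
    have hν : Measurable fun p : ℝ × ℝ => cdf ν p.2 :=
      (monotone_cdf ν).measurable.comp measurable_snd
    exact (measurableSet_lt (hμ.min hν) measurable_fst).inter
      (measurableSet_le measurable_fst (hμ.max hν))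
  calc ∫⁻ u in Ioc 0 1, ENNReal.ofReal |Q u - R u|
      = ∫⁻ u in Ioc 0 1, volume (Prod.mk u ⁻¹' S) := by
        refine setLIntegral_congr_fun measurableSet_Ioc fun u hu => ?_
        rw [← volume_Ico_min_max]
        congr 1
        ext x
        simp only [S, mem_preimage, mem_ofPred_eq, mem_Ico_min_max_iff, mem_uIoc_iff, hQ u hu,
          hR u hu]
    _ = ∫⁻ x, volume.restrict (Ioc 0 1) (Ι (cdf μ x) (cdf ν x)) := by
        rw [← Measure.prod_apply hS, Measure.prod_apply_symm hS]
        rfl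
    _ = ∫⁻ x, ENNReal.ofReal |cdf μ x - cdf ν x| := by
        refine lintegral_congr fun x => ?_
        have hsub : Ι (cdf μ x) (cdf ν x) ⊆ Ioc 0 1 :=
          Ioc_subset_Ioc (le_min (cdf_nonneg μ x) (cdf_nonneg ν x))
            (max_le (cdf_le_one μ x) (cdf_le_one ν x))
        rw [Measure.restrict_apply' measurableSet_Ioc, inter_eq_left.2 hsub, Real.volume_uIoc,
          abs_sub_comm]

lemma map_fst_comonotoneCoupling [IsProbabilityMeasure μ] (hQ : IsQuantileFun μ Q)
    (hR : IsQuantileFun ν R) :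
    (comonotoneCoupling Q R).map Prod.fst = μ := by
  rw [comonotoneCoupling, AEMeasurable.map_map_of_aemeasurable measurable_fst.aemeasurable
    (hQ.aemeasurable.prodMk hR.aemeasurable)]
  exact hQ.map_volume

lemma map_snd_comonotoneCoupling [IsProbabilityMeasure ν] (hQ : IsQuantileFun μ Q)
    (hR : IsQuantileFun ν R) :
    (comonotoneCoupling Q R).map Prod.snd = ν := by
  rw [comonotoneCoupling, AEMeasurable.map_map_of_aemeasurable measurable_snd.aemeasurable
    (hQ.aemeasurable.prodMk hR.aemeasurable)]
  exact hR.map_volume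

lemma isProbabilityMeasure_comonotoneCoupling (hQ : IsQuantileFun μ Q) (hR : IsQuantileFun ν R) :
    IsProbabilityMeasure (comonotoneCoupling Q R) :=
  have : IsProbabilityMeasure (volume.restrict (Ioc (0 : ℝ) 1)) := ⟨by simp⟩
  Measure.isProbabilityMeasure_map (hQ.aemeasurable.prodMk hR.aemeasurable)

lemma lintegral_abs_sub_comonotoneCoupling [IsProbabilityMeasure μ] [IsProbabilityMeasure ν]
    (hQ : IsQuantileFun μ Q) (hR : IsQuantileFun ν R) :
    ∫⁻ p, ENNReal.ofReal |p.1 - p.2| ∂(comonotoneCoupling Q R)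
      = ∫⁻ x, ENNReal.ofReal |cdf μ x - cdf ν x| := by
  rw [comonotoneCoupling, lintegral_map' (by fun_prop) (hQ.aemeasurable.prodMk hR.aemeasurable)]
  exact hQ.lintegral_abs_sub hR

theorem isLeast_integral_abs_sub_comonotoneCoupling [IsProbabilityMeasure μ]
    [IsProbabilityMeasure ν] {X : Set ℝ} (hX : IsCompact X) (hμ : μ Xᶜ = 0) (hν : ν Xᶜ = 0)
    (hQ : IsQuantileFun μ Q) (hR : IsQuantileFun ν R) :
    IsLeast {c | ∃ γ : Measure (ℝ × ℝ), IsProbabilityMeasure γ ∧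
        γ.map Prod.fst = μ ∧ γ.map Prod.snd = ν ∧ c = ∫ p, |p.1 - p.2| ∂γ}
      (∫ p, |p.1 - p.2| ∂(comonotoneCoupling Q R)) := by
  have := hQ.isProbabilityMeasure_comonotoneCoupling hR
  have hcost : ∀ γ : Measure (ℝ × ℝ), [IsFiniteMeasure γ] → γ.map Prod.fst = μ →
      γ.map Prod.snd = ν →
      ENNReal.ofReal (∫ p, |p.1 - p.2| ∂γ) = ∫⁻ p, ENNReal.ofReal |p.1 - p.2| ∂γ :=
    fun γ _ h1 h2 => ofReal_integral_eq_lintegral_ofReal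
      (integrable_abs_sub_of_isCompact hX h1 h2 hμ hν) (ae_of_all _ fun _ => abs_nonneg _)
  have h1 := hQ.map_fst_comonotoneCoupling hR
  have h2 := hQ.map_snd_comonotoneCoupling hR
  refine ⟨⟨_, this, h1, h2, rfl⟩, ?_⟩
  rintro _ ⟨γ, _, hγ1, hγ2, rfl⟩
  rw [← ENNReal.ofReal_le_ofReal_iff (integral_nonneg fun _ => abs_nonneg _), hcost _ h1 h2,
    hcost γ hγ1 hγ2, hQ.lintegral_abs_sub_comonotoneCoupling hR]
  exact lintegral_abs_sub_cdf_le hγ1 hγ2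

end IsQuantileFun

lemma StieltjesFunction.apply_csInf (f : StieltjesFunction ℝ) {S : Set ℝ} (hne : S.Nonempty)
    (hbdd : BddBelow S) : f (sInf S) = sInf (f '' S) :=
  (f.mono.monotoneOn S).map_csInf_of_continuousWithinAt
    ((f.right_continuous _).mono fun _ hs => csInf_le hbdd hs) hne hbdd

section QuantileOnCompact

variable {X : Set ℝ} {μ : Measure ℝ} [IsProbabilityMeasure μ]

lemma cdf_eq_measureReal_inter (hμ : μ Xᶜ = 0) (x : ℝ) : cdf μ x = μ.real (X ∩ Iic x) := by
  rw [cdf_eq_real, measureReal_def, measureReal_def, inter_comm, measure_inter_conull hμ]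

lemma exists_mem_le_le_cdf (hX : IsCompact X) (hμ : μ Xᶜ = 0) {t x : ℝ} (ht : 0 < t)
    (htx : t ≤ cdf μ x) : ∃ m ∈ X, m ≤ x ∧ t ≤ cdf μ m := by
  have hK : IsCompact (X ∩ Iic x) := hX.inter_right isClosed_Iic
  have hne : (X ∩ Iic x).Nonempty := by
    by_contra h
    rw [not_nonempty_iff_eq_empty] at h
    rw [cdf_eq_measureReal_inter hμ, h, measureReal_empty] at htx
    linarith
  obtain ⟨hmX, hmx⟩ := hK.sSup_mem hne
  refine ⟨_, hmX, hmx, htx.trans ?_⟩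
  rw [cdf_eq_measureReal_inter hμ, cdf_eq_measureReal_inter hμ]
  exact measureReal_mono fun y hy => ⟨hy.1, le_csSup hK.bddAbove hy⟩

lemma isQuantileFun_sInf (hX : IsCompact X) (hμ : μ Xᶜ = 0) :
    IsQuantileFun μ fun t => sInf {x | x ∈ X ∧ t ≤ cdf μ x} := by
  intro t ht x
  have hbdd : BddBelow {x | x ∈ X ∧ t ≤ cdf μ x} := hX.bddBelow.mono fun _ hx => hx.1
  constructor
  · intro hQx
    obtain ⟨b, hb⟩ := hX.bddAbove
    have hXb : X ⊆ Iic b := fun _ hy => hb hy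
    have hb1 : cdf μ b = 1 := by
      rw [cdf_eq_measureReal_inter hμ, inter_eq_left.2 hXb, measureReal_def,
        (prob_compl_eq_zero_iff hX.isClosed.measurableSet).1 hμ, ENNReal.toReal_one]
    obtain ⟨m, hmX, -, hm⟩ := exists_mem_le_le_cdf hX hμ ht.1 (by rw [hb1]; exact ht.2)
    have hne : {x | x ∈ X ∧ t ≤ cdf μ x}.Nonempty := ⟨m, hmX, hm⟩
    refine le_trans ?_ (monotone_cdf μ hQx)
    rw [StieltjesFunction.apply_csInf _ hne hbdd]
    exact le_csInf (hne.image _) (forall_mem_image.2 fun _ hy => hy.2)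
  · intro htx
    obtain ⟨m, hmX, hmx, hm⟩ := exists_mem_le_le_cdf hX hμ ht.1 htx
    exact (csInf_le hbdd ⟨hmX, hm⟩).trans hmx

end QuantileOnCompact

theorem stmt_3_general (X : Set ℝ) (hX : IsCompact X)
    (μ ν : Measure ℝ) [IsProbabilityMeasure μ] [IsProbabilityMeasure ν]
    (hμ : μ Xᶜ = 0) (hν : ν Xᶜ = 0)
    (Fμ Fν : ℝ → ℝ)
    (hFμ : ∀ z, Fμ z = (μ (X ∩ Iic z)).toReal)
    (hFν : ∀ z, Fν z = (ν (X ∩ Iic z)).toReal)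
    (Qμ Qν : ℝ → ℝ)
    (hQμ : ∀ t, Qμ t = sInf {x | x ∈ X ∧ t ≤ Fμ x})
    (hQν : ∀ t, Qν t = sInf {x | x ∈ X ∧ t ≤ Fν x})
    (Ω : Type*) [MeasurableSpace Ω] (P : Measure Ω)
    (U : Ω → ℝ) (hU : Measurable U)
    (hUnif : P.map U = volume.restrict (Icc (0:ℝ) 1))
    (γ : Measure (ℝ × ℝ)) (hγ : γ = P.map (fun ω => (Qμ (U ω), Qν (U ω)))) :
    γ.map Prod.fst = μ ∧ γ.map Prod.snd = ν ∧
      ∫ p, |p.1 - p.2| ∂γ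
        = sInf {c | ∃ γ' : Measure (ℝ × ℝ), IsProbabilityMeasure γ' ∧
            γ'.map Prod.fst = μ ∧ γ'.map Prod.snd = ν ∧ c = ∫ p, |p.1 - p.2| ∂γ'} := by
  obtain rfl : Fμ = cdf μ := funext fun z => (hFμ z).trans (cdf_eq_measureReal_inter hμ z).symm
  obtain rfl : Fν = cdf ν := funext fun z => (hFν z).trans (cdf_eq_measureReal_inter hν z).symm
  have hQμ' : IsQuantileFun μ Qμ := funext hQμ ▸ isQuantileFun_sInf hX hμ
  have hQν' : IsQuantileFun ν Qν := funext hQν ▸ isQuantileFun_sInf hX hν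
  have hUnif' : P.map U = volume.restrict (Ioc 0 1) := by
    rw [hUnif, Measure.restrict_congr_set Ioc_ae_eq_Icc]
  obtain rfl : γ = comonotoneCoupling Qμ Qν := by
    rw [hγ, comonotoneCoupling, ← hUnif', AEMeasurable.map_map_of_aemeasurable _ hU.aemeasurable]
    · rfl
    · rw [hUnif']
      exact hQμ'.aemeasurable.prodMk hQν'.aemeasurable
  exact ⟨hQμ'.map_fst_comonotoneCoupling hQν', hQμ'.map_snd_comonotoneCoupling hQν',
    (hQμ'.isLeast_integral_abs_sub_comonotoneCoupling hX hμ hν hQν').csInf_eq.symm⟩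

theorem stmt_3 (X : Set ℝ) (hX : IsCompact X) (hXne : X.Nonempty)
    (μ ν : Measure ℝ) [IsProbabilityMeasure μ] [IsProbabilityMeasure ν]
    (hμ : μ Xᶜ = 0) (hν : ν Xᶜ = 0)
    (Fμ Fν : ℝ → ℝ)
    (hFμ : ∀ z, Fμ z = (μ (X ∩ Iic z)).toReal)
    (hFν : ∀ z, Fν z = (ν (X ∩ Iic z)).toReal)
    (Qμ Qν : ℝ → ℝ)
    (hQμ : ∀ t, Qμ t = sInf {x | x ∈ X ∧ t ≤ Fμ x})
    (hQν : ∀ t, Qν t = sInf {x | x ∈ X ∧ t ≤ Fν x})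
    (Ω : Type*) [MeasurableSpace Ω] (P : Measure Ω) [IsProbabilityMeasure P]
    (U : Ω → ℝ) (hU : Measurable U)
    (hUnif : P.map U = volume.restrict (Icc (0:ℝ) 1))
    (γ : Measure (ℝ × ℝ)) (hγ : γ = P.map (fun ω => (Qμ (U ω), Qν (U ω)))) :
    γ.map Prod.fst = μ ∧ γ.map Prod.snd = ν ∧
      ∫ p, |p.1 - p.2| ∂γ
        = sInf {c | ∃ γ' : Measure (ℝ × ℝ), IsProbabilityMeasure γ' ∧
            γ'.map Prod.fst = μ ∧ γ'.map Prod.snd = ν ∧ c = ∫ p, |p.1 - p.2| ∂γ'} :=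
  stmt_3_general X hX μ ν hμ hν Fμ Fν hFμ hFν Qμ Qν hQμ hQν Ω P U hU hUnif γ hγ
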